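/- Let Ψ be a monotone Boolean formula over x_1,y_1,...,x_n,y_n and D_n = x_1∧y_1 ∨ ... ∨ x_n∧y_n. If Ψ → D_n is not a tautology, then the function computed by (Ψ ∧ (w_1∧w_3 ∨ w_2∧w_4)) ∧ (D_n ∨ w_1∧w_2 ∨ w_3∧w_4) (with fresh variables w_1,...,w_4) is not read-once. -/

import Mathlib

/-!
Fix an assignment `a` to the `x_i, y_i` with `Ψ(a) = 1` and `D_n(a) = 0`. Substituting it turns the
formula into `(w₁w₃ ∨ w₂w₄) ∧ (w₁w₂ ∨ w₃w₄)`, the 3-out-of-4 threshold function, while substituting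
constants into a read-once formula leaves a constant or a read-once formula. The threshold function
is neither: the top gate of a read-once formula splits the variables into two nonempty disjoint
parts, and on the points with one or two zeros (where the function is `1` exactly when at most one
coordinate is `0`) this is impossible for `∧` as well as for `∨`.
-/

/-- Monotone Boolean formulas over a variable type `V`, built from variables with ∧ and ∨. -/
inductive MonFormula (V : Type) : Type
  | var : V → MonFormula V
  | conj : MonFormula V → MonFormula V → MonFormula V
  | disj : MonFormula V → MonFormula V → MonFormula V

namespace MonFormula

def eval {V : Type} : MonFormula V → (V → Bool) → Bool
  | var v, a => a v
  | conj φ ψ, a => eval φ a && eval ψ a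
  | disj φ ψ, a => eval φ a || eval ψ a

/-- Number of occurrences of the variable `v` in the formula. -/
def occs {V : Type} [DecidableEq V] : MonFormula V → V → ℕ
  | var u, v => if u = v then 1 else 0
  | conj φ ψ, v => occs φ v + occs ψ v
  | disj φ ψ, v => occs φ v + occs ψ v

/-- A formula is read-once if every variable occurs at most once in it. -/
def ReadOnce {V : Type} [DecidableEq V] (φ : MonFormula V) : Prop :=
  ∀ v, φ.occs v ≤ 1

end MonFormula

/-- A Boolean function is read-once if some read-once monotone formula computes it. -/
def ReadOnceFun {V : Type} [DecidableEq V] (f : (V → Bool) → Bool) : Prop :=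
  ∃ φ : MonFormula V, φ.ReadOnce ∧ ∀ a, φ.eval a = f a

namespace MonFormula

variable {V W : Type}

theorem eval_congr [DecidableEq V] (φ : MonFormula V) {a b : V → Bool}
    (h : ∀ v, φ.occs v ≠ 0 → a v = b v) : φ.eval a = φ.eval b := by
  induction φ with
  | var v => exact h v (by simp [occs])
  | conj α β ihα ihβ | disj α β ihα ihβ =>
    simp only [eval]
    rw [ihα fun v hv => h v (by simp only [occs]; omega),
      ihβ fun v hv => h v (by simp only [occs]; omega)]

theorem exists_occs_ne_zero [DecidableEq V] (φ : MonFormula V) : ∃ v, φ.occs v ≠ 0 := by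
  induction φ with
  | var v => exact ⟨v, by simp [occs]⟩
  | conj α β ihα _ | disj α β ihα _ =>
    obtain ⟨v, hv⟩ := ihα
    exact ⟨v, by simp only [occs]; omega⟩

abbrev ConstOr (W : Type) : Type := Bool ⊕ MonFormula W

namespace ConstOr

def eval : ConstOr W → (W → Bool) → Bool := Sum.elim (fun c _ => c) MonFormula.eval

def occs [DecidableEq W] : ConstOr W → W → ℕ := Sum.elim (fun _ _ => 0) MonFormula.occs

def conj : ConstOr W → ConstOr W → ConstOr W
  | .inl b, r | r, .inl b => if b then r else .inl false
  | .inr ψ, .inr χ => .inr (ψ.conj χ)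

def disj : ConstOr W → ConstOr W → ConstOr W
  | .inl b, r | r, .inl b => if b then .inl true else r
  | .inr ψ, .inr χ => .inr (ψ.disj χ)

theorem eval_conj (r s : ConstOr W) (w : W → Bool) :
    (r.conj s).eval w = (r.eval w && s.eval w) := by
  rcases r with (_ | _) | _ <;> rcases s with (_ | _) | _ <;> simp [conj, eval, MonFormula.eval]

theorem eval_disj (r s : ConstOr W) (w : W → Bool) :
    (r.disj s).eval w = (r.eval w || s.eval w) := by
  rcases r with (_ | _) | _ <;> rcases s with (_ | _) | _ <;> simp [disj, eval, MonFormula.eval]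

theorem occs_conj_le [DecidableEq W] (r s : ConstOr W) (w : W) :
    (r.conj s).occs w ≤ r.occs w + s.occs w := by
  rcases r with (_ | _) | _ <;> rcases s with (_ | _) | _ <;> simp [conj, occs, MonFormula.occs]

theorem occs_disj_le [DecidableEq W] (r s : ConstOr W) (w : W) :
    (r.disj s).occs w ≤ r.occs w + s.occs w := by
  rcases r with (_ | _) | _ <;> rcases s with (_ | _) | _ <;> simp [disj, occs, MonFormula.occs]

end ConstOr

def restrict : MonFormula (V ⊕ W) → (V → Bool) → ConstOr W
  | var (.inl v), a => .inl (a v)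
  | var (.inr w), _ => .inr (var w)
  | conj α β, a => (α.restrict a).conj (β.restrict a)
  | disj α β, a => (α.restrict a).disj (β.restrict a)

theorem eval_restrict (φ : MonFormula (V ⊕ W)) (a : V → Bool) (w : W → Bool) :
    (φ.restrict a).eval w = φ.eval (Sum.elim a w) := by
  induction φ with
  | var v => rcases v with v | v <;> rfl
  | conj α β ihα ihβ => simp only [restrict, ConstOr.eval_conj, ihα, ihβ, eval]
  | disj α β ihα ihβ => simp only [restrict, ConstOr.eval_disj, ihα, ihβ, eval]

theorem occs_restrict_le [DecidableEq V] [DecidableEq W] (φ : MonFormula (V ⊕ W))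
    (a : V → Bool) (w : W) : (φ.restrict a).occs w ≤ φ.occs (.inr w) := by
  induction φ with
  | var v => rcases v with v | v <;> simp [restrict, ConstOr.occs, occs]
  | conj α β ihα ihβ =>
    exact (ConstOr.occs_conj_le _ _ w).trans (Nat.add_le_add ihα ihβ)
  | disj α β ihα ihβ =>
    exact (ConstOr.occs_disj_le _ _ w).trans (Nat.add_le_add ihα ihβ)

end MonFormula

theorem ReadOnceFun.restrict_inl {V W : Type} [DecidableEq V] [DecidableEq W]
    {f : (V ⊕ W → Bool) → Bool} (hf : ReadOnceFun f) (a : V → Bool) :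
    (∃ c, ∀ w, f (Sum.elim a w) = c) ∨ ReadOnceFun fun w => f (Sum.elim a w) := by
  obtain ⟨φ, hφ, hf⟩ := hf
  rcases h : φ.restrict a with c | χ
  · refine .inl ⟨c, fun w => ?_⟩
    rw [← hf, ← φ.eval_restrict, h]
    rfl
  · refine .inr ⟨χ, fun w => ?_, fun w => ?_⟩
    · simpa [h, MonFormula.ConstOr.occs] using (φ.occs_restrict_le a w).trans (hφ _)
    · simpa [h, MonFormula.ConstOr.eval, hf] using φ.eval_restrict a w

namespace MonFormula

variable {V : Type} [DecidableEq V]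

def allBut (s : Finset V) (v : V) : Bool := decide (v ∉ s)

theorem eval_allBut_insert (φ : MonFormula V) {v : V} (hv : φ.occs v = 0) (s : Finset V) :
    φ.eval (allBut (insert v s)) = φ.eval (allBut s) :=
  φ.eval_congr fun u hu => by
    have : u ≠ v := by rintro rfl; exact hu hv
    simp [allBut, this]

theorem exists_ne_of_occs_add_le_one {α β : MonFormula V}
    (h : ∀ v, α.occs v + β.occs v ≤ 1) : ∃ i j, i ≠ j ∧ α.occs j = 0 ∧ β.occs i = 0 := by
  obtain ⟨i, hi⟩ := α.exists_occs_ne_zero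
  obtain ⟨j, hj⟩ := β.exists_occs_ne_zero
  have hi' := h i
  have hj' := h j
  exact ⟨i, j, by rintro rfl; omega, by omega, by omega⟩

end MonFormula

open MonFormula

def threshold3of4 (w : Fin 4 → Bool) : Bool :=
  (w 0 && w 2 || w 1 && w 3) && (w 0 && w 1 || w 2 && w 3)

theorem threshold3of4_allBut_singleton (i : Fin 4) : threshold3of4 (allBut {i}) = true := by
  revert i; decide

theorem threshold3of4_allBut_pair {i j : Fin 4} (hij : i ≠ j) :
    threshold3of4 (allBut {i, j}) = false := by
  revert i j; decide

/-- Since `α` ignores `j`, it vanishes at `allBut {i}` as it does at `allBut {j, i}`; so `β` is `1` at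
`allBut {i}` but `0` at `allBut {k, i}`, and must read `k`. -/
theorem occs_ne_zero_of_disj_eq_threshold3of4 {α β : MonFormula (Fin 4)}
    (h : ∀ w, (α.eval w || β.eval w) = threshold3of4 w) {i j k : Fin 4}
    (hji : j ≠ i) (hki : k ≠ i) (hαj : α.occs j = 0) : β.occs k ≠ 0 := by
  have hβi : β.eval (allBut {i}) = true := by
    have hpair := h (allBut {j, i})
    rw [α.eval_allBut_insert hαj, threshold3of4_allBut_pair hji] at hpair
    simpa [(Bool.or_eq_false_iff.mp hpair).1] using
      (h _).trans (threshold3of4_allBut_singleton i)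
  intro hβk
  have := h (allBut {k, i})
  rw [β.eval_allBut_insert hβk, hβi, threshold3of4_allBut_pair hki] at this
  simp at this

theorem not_readOnceFun_threshold3of4 : ¬ ReadOnceFun threshold3of4 := by
  rintro ⟨φ, hro, hφ⟩
  unfold ReadOnce at hro
  cases φ with
  | var v => simpa [eval, allBut] using (hφ _).trans (threshold3of4_allBut_singleton v)
  | conj α β =>
    simp only [occs] at hro
    obtain ⟨i, j, hij, hαj, hβi⟩ := exists_ne_of_occs_add_le_one hro
    have hα : α.eval (allBut {j, i}) = true := by
      rw [α.eval_allBut_insert hαj]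
      exact (Bool.and_eq_true_iff.mp ((hφ _).trans (threshold3of4_allBut_singleton i))).1
    have hβ : β.eval (allBut {i, j}) = true := by
      rw [β.eval_allBut_insert hβi]
      exact (Bool.and_eq_true_iff.mp ((hφ _).trans (threshold3of4_allBut_singleton j))).2
    have := (hφ _).trans (threshold3of4_allBut_pair hij)
    simp [eval, Finset.pair_comm j i ▸ hα, hβ] at this
  | disj α β =>
    simp only [occs] at hro
    obtain ⟨i, j, hij, hαj, hβi⟩ := exists_ne_of_occs_add_le_one hro
    obtain ⟨k, hki, hkj⟩ := Fin.exists_ne_and_ne_of_two_lt i j (by norm_num)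
    have hβk := occs_ne_zero_of_disj_eq_threshold3of4 hφ hij.symm hki hαj
    have hαk := occs_ne_zero_of_disj_eq_threshold3of4
      (fun w => (Bool.or_comm _ _).trans (hφ w)) hij hkj hβi
    have := hro k
    omega

/-- Variables: `Sum.inl (i, false)` is `x_i`, `Sum.inl (i, true)` is `y_i`, and
`Sum.inr 0, …, Sum.inr 3` are the fresh variables `w_1, …, w_4`. -/
theorem stmt_10 (n : ℕ) (Ψ : MonFormula (Fin n × Bool))
    (hnotaut : ∃ a : Fin n × Bool → Bool,
      Ψ.eval a = true ∧ ¬ ∃ i : Fin n, a (i, false) = true ∧ a (i, true) = true) :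
    ¬ ReadOnceFun (fun b : (Fin n × Bool) ⊕ Fin 4 → Bool =>
        (Ψ.eval (fun p => b (Sum.inl p)) &&
          (b (Sum.inr 0) && b (Sum.inr 2) || b (Sum.inr 1) && b (Sum.inr 3))) &&
        (decide (∃ i : Fin n, b (Sum.inl (i, false)) = true ∧
            b (Sum.inl (i, true)) = true) ||
          b (Sum.inr 0) && b (Sum.inr 1) || b (Sum.inr 2) && b (Sum.inr 3))) := by
  intro hf
  obtain ⟨a, hΨ, hD⟩ := hnotaut
  rcases hf.restrict_inl a with ⟨c, hc⟩ | hTh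
  · have h₀ := hc fun _ => false
    have h₁ := hc fun _ => true
    simp [hΨ, hD] at h₀ h₁
    exact Bool.false_ne_true (h₀.symm.trans h₁)
  · refine not_readOnceFun_threshold3of4 ?_
    convert hTh using 2 with w
    simp [threshold3of4, hΨ, hD]
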